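/- Let Q be an n×n real symmetric matrix with nonpositive off-diagonal entries and eigenvalues λ_1 ≥ ... ≥ λ_n. Let S_1, ..., S_m be a partition of the index set {1,...,n}, let p_1, ..., p_m be natural numbers with Σ_{k=1}^m p_k = p, and let γ > 0. Define the penalized objective F(x) = xᵗ Q x − γ Σ_{k=1}^m (Σ_{j∈S_k} x_j − p_k)². Then for every binary vector x ∈ {0,1}^n satisfying the partitioned constraints Σ_{j∈S_k} x_j = p_k for all k = 1,...,m, one has F(x) = xᵗ Q x ≤ Σ_{i=1}^p λ_i. -/

import Mathlib

/-! For binary `x` the off-diagonal entries of `Q` only lower `xᵗQx`, so `xᵗQx ≤ ∑ⱼ Qⱼⱼ xⱼ`.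
Writing `Q = U diag(λ) Uᵗ`, the right side is `∑ₐ λₐ tₐ` with `tₐ = ∑ⱼ Uⱼₐ² xⱼ`. As `(Uⱼₐ²)` is
doubly stochastic, `0 ≤ tₐ ≤ 1` and `∑ₐ tₐ = ∑ⱼ xⱼ = p`, and among such weightings of the
eigenvalues the largest puts weight one on the `p` largest of them. -/

open Matrix Finset

theorem sum_mul_le_sum_mul_of_threshold {ι : Type*} [Fintype ι] (lam s t : ι → ℝ) (c : ℝ)
    (h : ∀ i, (lam i - c) * (s i - t i) ≤ 0) (hst : ∑ i, s i = ∑ i, t i) :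
    ∑ i, lam i * s i ≤ ∑ i, lam i * t i := by
  have hexpand : ∑ i, (lam i - c) * (s i - t i)
      = ∑ i, lam i * s i - ∑ i, lam i * t i - c * (∑ i, s i - ∑ i, t i) := by
    simp only [sub_mul, mul_sub, sum_sub_distrib, mul_sum]
    ring
  have := sum_nonpos fun i (_ : i ∈ univ) => h i
  rw [hexpand, hst, sub_self, mul_zero, sub_zero] at this
  linarith

theorem Antitone.sum_mul_le_sum_filter_lt {n : ℕ} {lam : Fin n → ℝ} (hlam : Antitone lam)
    {s : Fin n → ℝ} (h0 : ∀ i, 0 ≤ s i) (h1 : ∀ i, s i ≤ 1) {p : ℕ} (hs : ∑ i, s i = p) :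
    ∑ i, lam i * s i ≤ ∑ i ∈ univ.filter (fun i : Fin n => (i : ℕ) < p), lam i := by
  suffices ∑ i, lam i * s i ≤ ∑ i, lam i * if (i : ℕ) < p then 1 else 0 by
    simpa only [mul_boole, sum_filter] using this
  rcases lt_or_ge p n with hp | hp
  · refine sum_mul_le_sum_mul_of_threshold _ _ _ (lam ⟨p, hp⟩) (fun i => ?_) ?_
    · by_cases hi : (i : ℕ) < p
      · have : lam ⟨p, hp⟩ ≤ lam i := hlam (Fin.le_def.mpr hi.le)
        simp only [hi, if_true]
        nlinarith [h1 i]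
      · have : lam i ≤ lam ⟨p, hp⟩ := hlam (Fin.le_def.mpr (not_lt.mp hi))
        simp only [hi, if_false, sub_zero]
        nlinarith [h0 i]
    · have : univ.filter (fun i : Fin n => (i : ℕ) < p) = Iio ⟨p, hp⟩ := by
        ext i; simp [Fin.lt_def]
      rw [hs, sum_boole, this, Fin.card_Iio]
  · have hs1 : ∀ i, s i = 1 := by
      have hsum : ∑ i, s i = ∑ _i : Fin n, (1 : ℝ) := by
        refine le_antisymm (sum_le_sum fun i _ => h1 i) ?_
        rw [hs, sum_const, card_univ, Fintype.card_fin, nsmul_one]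
        exact_mod_cast hp
      simpa using (sum_eq_sum_iff_of_le fun i _ => h1 i).mp hsum
    refine le_of_eq (sum_congr rfl fun i _ => ?_)
    simp [hs1 i, i.isLt.trans_le hp]

theorem Matrix.sum_sq_row_eq_one_of_mem_unitaryGroup {ι : Type*} [Fintype ι] [DecidableEq ι]
    {U : Matrix ι ι ℝ} (hU : U ∈ unitaryGroup ι ℝ) (j : ι) : ∑ a, U j a ^ 2 = 1 := by
  simpa [mul_apply, one_apply, sq] using congrFun₂ (mem_unitaryGroup_iff.mp hU) j j

theorem Matrix.sum_sq_col_eq_one_of_mem_unitaryGroup {ι : Type*} [Fintype ι] [DecidableEq ι]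
    {U : Matrix ι ι ℝ} (hU : U ∈ unitaryGroup ι ℝ) (a : ι) : ∑ j, U j a ^ 2 = 1 := by
  simpa [mul_apply, one_apply, sq] using congrFun₂ (mem_unitaryGroup_iff'.mp hU) a a

theorem Matrix.IsHermitian.apply_self_eq_sum_eigenvalues_mul_sq {ι : Type*} [Fintype ι]
    [DecidableEq ι] {A : Matrix ι ι ℝ} (hA : A.IsHermitian) (j : ι) :
    A j j = ∑ a, hA.eigenvalues a * (hA.eigenvectorUnitary : Matrix ι ι ℝ) j a ^ 2 := by
  conv_lhs => rw [hA.spectral_theorem]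
  simp only [Unitary.conjStarAlgAut_apply, mul_apply, diagonal_apply, Function.comp_apply,
    RCLike.ofReal_real_eq_id, id_eq, star_apply, star_trivial, mul_ite, mul_zero,
    sum_ite_eq', mem_univ, if_true]
  exact sum_congr rfl fun a _ => by ring

theorem Matrix.IsHermitian.sum_diag_mul_le_sum_filter_lt {n : ℕ} {A : Matrix (Fin n) (Fin n) ℝ}
    (hA : A.IsHermitian) {lam : Fin n → ℝ} (hlam : Antitone lam) {σ : Equiv.Perm (Fin n)}
    (hσ : ∀ i, lam (σ i) = hA.eigenvalues i) {x : Fin n → ℝ} (h0 : ∀ j, 0 ≤ x j)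
    (h1 : ∀ j, x j ≤ 1) {p : ℕ} (hx : ∑ j, x j = p) :
    ∑ j, A j j * x j ≤ ∑ i ∈ univ.filter (fun i : Fin n => (i : ℕ) < p), lam i := by
  set U : Matrix (Fin n) (Fin n) ℝ := (hA.eigenvectorUnitary : Matrix (Fin n) (Fin n) ℝ)
  have hU : U ∈ unitaryGroup (Fin n) ℝ := hA.eigenvectorUnitary.2
  set t : Fin n → ℝ := fun a => ∑ j, U j a ^ 2 * x j
  have ht0 : ∀ a, 0 ≤ t a := fun a => sum_nonneg fun j _ => mul_nonneg (sq_nonneg _) (h0 j)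
  have ht1 : ∀ a, t a ≤ 1 := fun a => calc
    t a ≤ ∑ j, U j a ^ 2 := sum_le_sum fun j _ => mul_le_of_le_one_right (sq_nonneg _) (h1 j)
    _ = 1 := sum_sq_col_eq_one_of_mem_unitaryGroup hU a
  have hts : ∑ a, t a = p := by
    simp only [t]
    rw [sum_comm, ← hx]
    simp only [← sum_mul, sum_sq_row_eq_one_of_mem_unitaryGroup hU, one_mul]
  have hdiag : ∑ j, A j j * x j = ∑ a, lam (σ a) * t a := by
    simp only [hA.apply_self_eq_sum_eigenvalues_mul_sq, hσ, t, sum_mul, mul_sum]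
    rw [sum_comm]
    exact sum_congr rfl fun a _ => sum_congr rfl fun j _ => by ring
  calc ∑ j, A j j * x j = ∑ i, lam i * t (σ.symm i) := by
        rw [hdiag, ← Equiv.sum_comp σ (fun i => lam i * t (σ.symm i))]
        simp only [Equiv.symm_apply_apply]
    _ ≤ _ := hlam.sum_mul_le_sum_filter_lt (fun _ => ht0 _) (fun _ => ht1 _)
        (by rw [σ.symm.sum_comp t, hts])

theorem Matrix.dotProduct_mulVec_le_sum_diag_mul_sq {ι : Type*} [Fintype ι] {A : Matrix ι ι ℝ}
    (hA : ∀ i j, i ≠ j → A i j ≤ 0) {x : ι → ℝ} (hx : ∀ i, 0 ≤ x i) :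
    x ⬝ᵥ A *ᵥ x ≤ ∑ i, A i i * x i ^ 2 := by
  classical
  refine sum_le_sum fun i _ => ?_
  have hoff : ∑ j ∈ univ.erase i, A i j * x j ≤ 0 := sum_nonpos fun j hj =>
    mul_nonpos_of_nonpos_of_nonneg (hA i j (ne_of_mem_erase hj).symm) (hx j)
  rw [mulVec, dotProduct, ← add_sum_erase _ _ (mem_univ i)]
  nlinarith [hx i]

theorem stmt1_general {n m : ℕ} (Q : Matrix (Fin n) (Fin n) ℝ) (hQ : Q.IsHermitian)
    (hoff : ∀ i j : Fin n, i ≠ j → Q i j ≤ 0)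
    (lam : Fin n → ℝ) (hlam : Antitone lam)
    (σ : Equiv.Perm (Fin n)) (hσ : ∀ i, lam (σ i) = hQ.eigenvalues i)
    (S : Fin m → Finset (Fin n))
    (hdisj : ∀ k l : Fin m, k ≠ l → Disjoint (S k) (S l))
    (hcover : Finset.univ.biUnion S = Finset.univ)
    (pk : Fin m → ℕ) (p : ℕ) (hpk : ∑ k, pk k = p)
    (γ : ℝ)
    (x : Fin n → ℝ) (hx : ∀ i, x i = 0 ∨ x i = 1)
    (hcon : ∀ k : Fin m, ∑ j ∈ S k, x j = pk k) :
    (x ⬝ᵥ Q.mulVec x - γ * ∑ k : Fin m, ((∑ j ∈ S k, x j) - pk k) ^ 2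
        = x ⬝ᵥ Q.mulVec x)
    ∧ x ⬝ᵥ Q.mulVec x ≤ ∑ k ∈ Finset.univ.filter (fun i : Fin n => (i : ℕ) < p), lam k := by
  refine ⟨by simp [hcon], ?_⟩
  have hx0 : ∀ i, 0 ≤ x i := fun i => by rcases hx i with h | h <;> simp [h]
  have hx1 : ∀ i, x i ≤ 1 := fun i => by rcases hx i with h | h <;> simp [h]
  have hxsq : ∀ i, x i ^ 2 = x i := fun i => by rcases hx i with h | h <;> simp [h]
  have hsum : ∑ i, x i = p := by
    rw [← hcover, sum_biUnion fun k _ l _ hkl => hdisj k l hkl, ← hpk]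
    simp [hcon]
  calc x ⬝ᵥ Q *ᵥ x ≤ ∑ i, Q i i * x i ^ 2 := dotProduct_mulVec_le_sum_diag_mul_sq hoff hx0
    _ = ∑ i, Q i i * x i := by simp only [hxsq]
    _ ≤ _ := hQ.sum_diag_mul_le_sum_filter_lt hlam hσ hx0 hx1 hsum

/-- penalized objective `F(x) = xᵗQx − γ ∑_k (∑_{j ∈ S k} x j − p k)²`
agrees with `xᵗQx` on vectors satisfying the partitioned constraints, and is
bounded by the sum of the `p` largest eigenvalues of `Q`. -/
theorem stmt1 {n m : ℕ} (Q : Matrix (Fin n) (Fin n) ℝ) (hQ : Q.IsHermitian)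
    (hoff : ∀ i j : Fin n, i ≠ j → Q i j ≤ 0)
    (lam : Fin n → ℝ) (hlam : Antitone lam)
    (σ : Equiv.Perm (Fin n)) (hσ : ∀ i, lam (σ i) = hQ.eigenvalues i)
    (S : Fin m → Finset (Fin n))
    (hdisj : ∀ k l : Fin m, k ≠ l → Disjoint (S k) (S l))
    (hcover : Finset.univ.biUnion S = Finset.univ)
    (pk : Fin m → ℕ) (p : ℕ) (hpk : ∑ k, pk k = p)
    (γ : ℝ) (hγ : 0 < γ)
    (x : Fin n → ℝ) (hx : ∀ i, x i = 0 ∨ x i = 1)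
    (hcon : ∀ k : Fin m, ∑ j ∈ S k, x j = pk k) :
    (x ⬝ᵥ Q.mulVec x - γ * ∑ k : Fin m, ((∑ j ∈ S k, x j) - pk k) ^ 2
        = x ⬝ᵥ Q.mulVec x)
    ∧ x ⬝ᵥ Q.mulVec x ≤ ∑ k ∈ Finset.univ.filter (fun i : Fin n => (i : ℕ) < p), lam k :=
  stmt1_general Q hQ hoff lam hlam σ hσ S hdisj hcover pk p hpk γ x hx hcon
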